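/- Let q be an odd prime power with q ≡ 3 (mod 4). With notation as for the conic {x_1^2 = x_0 x_2} in PG(2,q), the F_2-matrix M_1 with rows and columns indexed by external points and (P_i,P_j)-entry |N_E(P_i) ∩ N_E(P_j)| mod 2 satisfies M_1^2 = I. -/

import Mathlib

/-- The quadratic form `Q(x₀,x₁,x₂) = x₁² - x₀x₂` on `F³`. -/
def Qc (F : Type) [Field F] (v : Fin 3 → F) : F := v 1 ^ 2 - v 0 * v 2

/-- The bilinear form associated to `Qc`. -/
def Bc (F : Type) [Field F] (x y : Fin 3 → F) : F :=
  (2 : F)⁻¹ * (Qc F (x + y) - Qc F x - Qc F y)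

/-- A point of `PG(2,q)` is absolute if `Q` vanishes on it. -/
def Absolute (F : Type) [Field F] (P : Projectivization F (Fin 3 → F)) : Prop :=
  Qc F P.rep = 0

/-- A point of `PG(2,q)` is external if `Q` takes a nonzero square value on it. -/
def External (F : Type) [Field F] (P : Projectivization F (Fin 3 → F)) : Prop :=
  IsSquare (Qc F P.rep) ∧ Qc F P.rep ≠ 0

/-- A point of `PG(2,q)` is internal if `Q` takes a non-square value on it. -/
def Internal (F : Type) [Field F] (P : Projectivization F (Fin 3 → F)) : Prop :=
  ¬ IsSquare (Qc F P.rep)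

/-- Lines of `PG(2,q)` are the 2-dimensional subspaces of `F³`. -/
def IsLine (F : Type) [Field F] (L : Submodule F (Fin 3 → F)) : Prop :=
  Module.finrank F ↥L = 2

/-- The number of absolute points on a line. -/
noncomputable def nAbs (F : Type) [Field F] (L : Submodule F (Fin 3 → F)) : ℕ :=
  Nat.card {P : Projectivization F (Fin 3 → F) // Absolute F P ∧ P.submodule ≤ L}

open Classical in
/-- Indicator of a proposition in `F₂`. -/
noncomputable def ind (p : Prop) : ZMod 2 := if p then 1 else 0

/-- `NE F P` is the set of external points, other than `P`, lying on some secant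
(meeting the conic twice) or passant (missing the conic) line through `P`. -/
def NE (F : Type) [Field F] (P : Projectivization F (Fin 3 → F)) :
    Set (Projectivization F (Fin 3 → F)) :=
  {R | External F R ∧ R ≠ P ∧
    ∃ L : Submodule F (Fin 3 → F), IsLine F L ∧ P.submodule ≤ L ∧ R.submodule ≤ L ∧
      (nAbs F L = 0 ∨ nAbs F L = 2)}

/-- The matrix over `F₂` indexed by external points whose `(P,R)` entry is `1`
iff `R ∈ NE F P`. -/
noncomputable def M1 (F : Type) [Field F] :
    Matrix {P : Projectivization F (Fin 3 → F) // External F P}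
      {P : Projectivization F (Fin 3 → F) // External F P} (ZMod 2) :=
  Matrix.of fun P R => ind (R.1 ∈ NE F P.1)

/-!
Parametrise the conic by `x ↦ (x₀², x₀x₁, x₁²)` on `PG(1,q)`. Every external point is then the
pole of a unique secant, i.e. of an unordered pair of distinct points of `PG(1,q)`, and the line
through two external points is a tangent exactly when their pairs meet: its discriminant factors
as a product of four `2 × 2` determinants. So `M1` is the disjointness matrix of the 2-subsets of
a set of size `n = q + 1`. The `(z, w)` entry of its square counts the 2-subsets avoiding `z ∪ w`,
which is `(n - |z ∪ w|).choose 2`; when `4 ∣ n` this is odd exactly when `z = w`.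
-/

open Finset

lemma ind_mul_ind (p q : Prop) : ind p * ind q = ind (p ∧ q) := by
  classical
  by_cases hp : p <;> by_cases hq : q <;> simp [ind, hp, hq]

lemma sum_ind {β : Type*} [Fintype β] (p : β → Prop) [DecidablePred p] :
    ∑ b, ind (p b) = (Fintype.card {b // p b} : ZMod 2) := by
  rw [Fintype.card_subtype, ← Finset.sum_boole]
  refine Finset.sum_congr rfl fun b _ => ?_
  by_cases h : p b <;> simp [ind, h]

lemma even_choose_two_iff : ∀ k : ℕ, Even (k.choose 2) ↔ k % 4 = 0 ∨ k % 4 = 1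
  | 0 | 1 | 2 | 3 => by decide
  | k + 4 => by
    have hstep : (k + 4).choose 2 = k.choose 2 + 2 * (2 * k + 3) := by
      simp [Nat.choose_succ_succ', Nat.choose_one_right]; ring
    rw [hstep, Nat.even_add, even_choose_two_iff k]
    simp only [even_two, Even.mul_right, iff_true]
    omega

section DisjointPairs

variable (α : Type*)

noncomputable def disjointPairsMatrix :
    Matrix {z : Sym2 α // ¬z.IsDiag} {z : Sym2 α // ¬z.IsDiag} (ZMod 2) :=
  Matrix.of fun z w => ind (∀ a ∈ z.1, a ∉ w.1)

variable {α} [DecidableEq α]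

lemma card_toFinset_union_eq_two_iff {z w : Sym2 α} (hz : ¬z.IsDiag) (hw : ¬w.IsDiag) :
    #(z.toFinset ∪ w.toFinset) = 2 ↔ z = w := by
  refine ⟨fun h => ?_, fun h => by rw [h, Finset.union_self, Sym2.card_toFinset_of_not_isDiag w hw]⟩
  have hz2 := Sym2.card_toFinset_of_not_isDiag z hz
  have hzu : z.toFinset = z.toFinset ∪ w.toFinset :=
    Finset.eq_of_subset_of_card_le Finset.subset_union_left (by omega)
  have hwz : w.toFinset ⊆ z.toFinset := by
    rw [hzu]
    exact Finset.subset_union_right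
  replace hwz : w.toFinset = z.toFinset :=
    Finset.eq_of_subset_of_card_le hwz (by rw [hz2, Sym2.card_toFinset_of_not_isDiag w hw])
  exact Sym2.ext fun a => by rw [← Sym2.mem_toFinset, ← Sym2.mem_toFinset, hwz]

variable [Fintype α]

lemma card_not_isDiag_forall_mem (s : Finset α) :
    Fintype.card {u : Sym2 α // ¬u.IsDiag ∧ ∀ a ∈ u, a ∈ s} = (#s).choose 2 := by
  rw [Fintype.card_subtype, ← Sym2.card_image_offDiag, ← Sym2.filter_image_mk_not_isDiag,
    ← Finset.sym2_eq_image]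
  congr 1
  ext u
  simp [Finset.mem_sym2_iff, and_comm]

lemma disjointPairsMatrix_mul_self_apply (z w : {z : Sym2 α // ¬z.IsDiag}) :
    (disjointPairsMatrix α * disjointPairsMatrix α) z w =
      ((Fintype.card α - #(z.1.toFinset ∪ w.1.toFinset)).choose 2 : ℕ) := by
  simp only [disjointPairsMatrix, Matrix.mul_apply, Matrix.of_apply, ind_mul_ind]
  rw [sum_ind, ← Finset.card_compl, ← card_not_isDiag_forall_mem]
  refine congrArg _ (Fintype.card_congr ((Equiv.subtypeSubtypeEquivSubtypeInter
    (fun u : Sym2 α => ¬u.IsDiag) (fun u => (∀ a ∈ z.1, a ∉ u) ∧ ∀ a ∈ u, a ∉ w.1)).trans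
    (Equiv.subtypeEquivRight fun u => ?_)))
  simp only [Finset.mem_compl, Finset.mem_union, Sym2.mem_toFinset, not_or]
  exact and_congr_right fun _ => ⟨fun h a ha => ⟨fun haz => h.1 a haz ha, h.2 a ha⟩,
    fun h => ⟨fun a haz hau => (h a hau).1 haz, fun a ha => (h a ha).2⟩⟩

theorem disjointPairsMatrix_sq (h4 : 4 ∣ Fintype.card α) : disjointPairsMatrix α ^ 2 = 1 := by
  ext z w
  rw [sq, disjointPairsMatrix_mul_self_apply, Matrix.one_apply]
  set k := #(z.1.toFinset ∪ w.1.toFinset)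
  have hk2 : 2 ≤ k := Sym2.card_toFinset_of_not_isDiag _ z.2 ▸
    Finset.card_le_card Finset.subset_union_left
  have hk4 : k ≤ 4 := (Finset.card_union_le _ _).trans (by
    rw [Sym2.card_toFinset_of_not_isDiag _ z.2, Sym2.card_toFinset_of_not_isDiag _ w.2])
  have hkn : k ≤ Fintype.card α := Finset.card_le_univ _
  have hkz := card_toFinset_union_eq_two_iff z.2 w.2
  split_ifs with h
  · rw [ZMod.natCast_eq_one_iff_odd, ← Nat.not_even_iff_odd, even_choose_two_iff]
    have := hkz.2 (congrArg Subtype.val h)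
    omega
  · rw [ZMod.natCast_eq_zero_iff_even, even_choose_two_iff]
    have : k ≠ 2 := fun h2 => h (Subtype.ext (hkz.1 h2))
    omega

end DisjointPairs

open Projectivization Submodule
open scoped LinearAlgebra.Projectivization

section QuadraticForm

variable {F : Type} [Field F]

/-- `Q(u + v) - Q u - Q v`, that is `2 * Bc F u v`. -/
def polarQc (u v : Fin 3 → F) : F := 2 * u 1 * v 1 - u 0 * v 2 - u 2 * v 0

/-- The discriminant of `t ↦ Q(t • u + v)`: the line through `u` and `v` is secant, tangent or
passant according as it is a nonzero square, zero or a non-square. -/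
def lineDiscr (u v : Fin 3 → F) : F := discrim (Qc F u) (polarQc u v) (Qc F v)

lemma Qc_smul (c : F) (v : Fin 3 → F) : Qc F (c • v) = c ^ 2 * Qc F v := by
  simp only [Qc, Pi.smul_apply, smul_eq_mul]; ring

lemma Qc_smul_add (t : F) (u v : Fin 3 → F) :
    Qc F (t • u + v) = Qc F u * (t * t) + polarQc u v * t + Qc F v := by
  simp only [Qc, polarQc, Pi.add_apply, Pi.smul_apply, smul_eq_mul]; ring

lemma lineDiscr_self (u : Fin 3 → F) : lineDiscr u u = 0 := by
  simp only [lineDiscr, discrim, polarQc, Qc]; ring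

lemma lineDiscr_smul (a b : F) (u v : Fin 3 → F) :
    lineDiscr (a • u) (b • v) = (a * b) ^ 2 * lineDiscr u v := by
  simp only [lineDiscr, discrim, polarQc, Qc, Pi.smul_apply, smul_eq_mul]; ring

lemma exists_Qc_rep_mk {v : Fin 3 → F} (hv : v ≠ 0) :
    ∃ a : F, a ≠ 0 ∧ Qc F (mk F v hv).rep = a ^ 2 * Qc F v := by
  obtain ⟨a, ha⟩ := exists_smul_eq_mk_rep F v hv
  exact ⟨a, a.ne_zero, by rw [← ha, Units.smul_def, Qc_smul]⟩

lemma absolute_mk {v : Fin 3 → F} (hv : v ≠ 0) : Absolute F (mk F v hv) ↔ Qc F v = 0 := by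
  obtain ⟨a, ha, hQ⟩ := exists_Qc_rep_mk hv
  simp [Absolute, hQ, ha]

lemma isSquare_sq_mul_iff {a : F} (ha : a ≠ 0) (t : F) : IsSquare (a ^ 2 * t) ↔ IsSquare t :=
  ⟨fun h => by simpa [ha] using (IsSquare.sq a⁻¹).mul h, (IsSquare.sq a).mul⟩

lemma external_mk {v : Fin 3 → F} (hv : v ≠ 0) :
    External F (mk F v hv) ↔ IsSquare (Qc F v) ∧ Qc F v ≠ 0 := by
  obtain ⟨a, ha, hQ⟩ := exists_Qc_rep_mk hv
  simp [External, hQ, ha, isSquare_sq_mul_iff ha]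

lemma finrank_span_pair_rep {P S : ℙ F (Fin 3 → F)} (h : P ≠ S) :
    Module.finrank F (span F {P.rep, S.rep}) = 2 := by
  have := finrank_span_eq_card (linearIndependent_pair_iff_ne.mpr h)
  rwa [Matrix.range_cons_cons_empty, Fintype.card_fin] at this

lemma span_pair_rep_eq {P S : ℙ F (Fin 3 → F)} (h : P ≠ S) {L : Submodule F (Fin 3 → F)}
    (hL : IsLine F L) (hP : P.submodule ≤ L) (hS : S.submodule ≤ L) :
    span F {P.rep, S.rep} = L := by
  rw [submodule_eq, span_singleton_le_iff_mem] at hP hS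
  refine eq_of_le_of_finrank_eq (span_le.mpr ?_) (by rw [finrank_span_pair_rep h, hL])
  rintro v (rfl | rfl)
  exacts [hP, hS]

lemma nAbs_span_pair {p s : Fin 3 → F} (hp : Qc F p ≠ 0) (hps : LinearIndependent F ![p, s]) :
    nAbs F (span F {p, s}) = Nat.card {t : F // Qc F (t • p + s) = 0} := by
  have hne (t : F) : t • p + s ≠ 0 := fun h =>
    one_ne_zero (LinearIndependent.pair_iff.mp hps t 1 (by rwa [one_smul])).2
  let f (t : {t : F // Qc F (t • p + s) = 0}) :
      {X : ℙ F (Fin 3 → F) // Absolute F X ∧ X.submodule ≤ span F {p, s}} :=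
    ⟨mk F _ (hne t), (absolute_mk _).mpr t.2, by
      rw [submodule_mk, span_singleton_le_iff_mem]
      exact add_mem (smul_mem _ _ (subset_span (by simp))) (subset_span (by simp))⟩
  refine (Nat.card_eq_of_bijective f ⟨fun t t' h => ?_, fun ⟨X, hX, hXL⟩ => ?_⟩).symm
  · obtain ⟨a, ha⟩ := (mk_eq_mk_iff' F _ _ _ _).mp (congrArg Subtype.val h)
    obtain ⟨hat, ha1⟩ := hps.eq_of_pair (s := a * t') (t := a) (s' := t) (t' := 1)
      (by rw [mul_smul, ← smul_add, one_smul, ha])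
    rw [ha1, one_mul] at hat
    exact Subtype.ext hat.symm
  · rw [submodule_eq, span_singleton_le_iff_mem, mem_span_pair] at hXL
    obtain ⟨a, b, hab⟩ := hXL
    have hb : b ≠ 0 := by
      rintro rfl
      rw [zero_smul, add_zero] at hab
      have hQ : a ^ 2 * Qc F p = 0 := by rw [← Qc_smul, hab]; exact hX
      have ha : a = 0 := by simpa [hp] using hQ
      exact X.rep_nonzero (by rw [← hab, ha, zero_smul])
    have hXrep : X.rep = b • ((a / b) • p + s) := by
      rw [smul_add, smul_smul, mul_div_cancel₀ _ hb, hab]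
    have ht : Qc F ((a / b) • p + s) = 0 := by
      have : b ^ 2 * Qc F ((a / b) • p + s) = 0 := by rw [← Qc_smul, ← hXrep]; exact hX
      simpa [hb] using this
    refine ⟨⟨a / b, ht⟩, Subtype.ext ?_⟩
    exact ((mk_eq_mk_iff' F _ _ X.rep_nonzero _).mpr ⟨b, hXrep.symm⟩).symm.trans (mk_rep X)

/-- Completing the square. -/
def quadraticRootsEquivSqrts [NeZero (2 : F)] {a b c : F} (ha : a ≠ 0) :
    {t : F // a * (t * t) + b * t + c = 0} ≃ {u : F // u ^ 2 = discrim a b c} :=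
  ((Equiv.mulLeft₀ (2 * a) (mul_ne_zero two_ne_zero ha)).trans (Equiv.addRight b)).subtypeEquiv
    fun t => by rw [quadratic_eq_zero_iff_discrim_eq_sq ha, eq_comm]; rfl

lemma card_sqrts_eq_zero_or_two_iff [Fintype F] [NeZero (2 : F)] (d : F) :
    (Nat.card {u : F // u ^ 2 = d} = 0 ∨ Nat.card {u : F // u ^ 2 = d} = 2) ↔ d ≠ 0 := by
  classical
  have hF : ringChar F ≠ 2 := fun h => by
    have := ringChar.Nat.cast_ringChar (R := F)
    rw [h, Nat.cast_ofNat] at this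
    exact two_ne_zero this
  have hcard := quadraticChar_card_sqrts hF d
  rw [← Nat.card_eq_card_toFinset] at hcard
  change ((Nat.card {u : F // u ^ 2 = d} : ℕ) : ℤ) = _ at hcard
  rcases eq_or_ne d 0 with rfl | hd
  · rw [quadraticChar_zero] at hcard
    simp only [ne_eq, not_true_eq_false, iff_false]
    omega
  · simp only [ne_eq, hd, not_false_eq_true, iff_true]
    rcases quadraticChar_dichotomy hd with h | h <;> rw [h] at hcard <;> omega

theorem mem_NE_iff [Fintype F] [NeZero (2 : F)] {P S : ℙ F (Fin 3 → F)}
    (hP : Qc F P.rep ≠ 0) : S ∈ NE F P ↔ External F S ∧ lineDiscr P.rep S.rep ≠ 0 := by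
  have hnAbs (h : P ≠ S) :
      nAbs F (span F {P.rep, S.rep}) = Nat.card {u : F // u ^ 2 = lineDiscr P.rep S.rep} := by
    rw [nAbs_span_pair hP (linearIndependent_pair_iff_ne.mpr h)]
    refine Nat.card_congr (.trans (.subtypeEquivRight fun t => ?_) (quadraticRootsEquivSqrts hP))
    rw [Qc_smul_add]
  constructor
  · rintro ⟨hS, hSP, L, hL, hPL, hSL, hn⟩
    rw [← span_pair_rep_eq hSP.symm hL hPL hSL, hnAbs hSP.symm] at hn
    exact ⟨hS, (card_sqrts_eq_zero_or_two_iff _).mp hn⟩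
  · rintro ⟨hS, hd⟩
    have hPS : P ≠ S := by rintro rfl; exact hd (lineDiscr_self _)
    refine ⟨hS, hPS.symm, _, finrank_span_pair_rep hPS, ?_, ?_, ?_⟩
    · rw [submodule_eq, span_singleton_le_iff_mem]; exact subset_span (by simp)
    · rw [submodule_eq, span_singleton_le_iff_mem]; exact subset_span (by simp)
    · rw [hnAbs hPS]; exact (card_sqrts_eq_zero_or_two_iff _).mpr hd

end QuadraticForm

section ConicParametrization

variable {F : Type} [Field F]

def wedge (x y : Fin 2 → F) : F := x 0 * y 1 - x 1 * y 0

def conicPoint (x : Fin 2 → F) : Fin 3 → F := ![x 0 ^ 2, x 0 * x 1, x 1 ^ 2]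

/-- The pole of the chord through `conicPoint x` and `conicPoint y` (of the tangent if they
coincide). -/
def chordPole (x y : Fin 2 → F) : Fin 3 → F :=
  ![2 * x 0 * y 0, x 0 * y 1 + x 1 * y 0, 2 * x 1 * y 1]

lemma chordPole_comm (x y : Fin 2 → F) : chordPole x y = chordPole y x := by
  simp only [chordPole]; ring_nf

lemma chordPole_smul (a b : F) (x y : Fin 2 → F) :
    chordPole (a • x) (b • y) = (a * b) • chordPole x y := by
  simp only [chordPole, Matrix.smul_cons, Matrix.smul_empty, Pi.smul_apply, smul_eq_mul]
  ring_nf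

lemma polarQc_smul_left (c : F) (u v : Fin 3 → F) : polarQc (c • u) v = c * polarQc u v := by
  simp only [polarQc, Pi.smul_apply, smul_eq_mul]; ring

lemma Qc_chordPole (x y : Fin 2 → F) : Qc F (chordPole x y) = wedge x y ^ 2 := by
  simp [Qc, chordPole, wedge]; ring

lemma lineDiscr_chordPole (x y u v : Fin 2 → F) :
    lineDiscr (chordPole x y) (chordPole u v) =
      16 * (wedge x u * wedge x v * wedge y u * wedge y v) := by
  simp [lineDiscr, discrim, polarQc, Qc, chordPole, wedge]; ring

lemma polarQc_chordPole_conicPoint (x y z : Fin 2 → F) :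
    polarQc (chordPole x y) (conicPoint z) = -2 * (wedge x z * wedge y z) := by
  simp [polarQc, chordPole, conicPoint, wedge]; ring

lemma chordPole_ne_zero [NeZero (2 : F)] {x y : Fin 2 → F} (hx : x ≠ 0) (hy : y ≠ 0) :
    chordPole x y ≠ 0 := by
  intro h
  obtain ⟨h0, h1, h2⟩ : 2 * x 0 * y 0 = 0 ∧ x 0 * y 1 + x 1 * y 0 = 0 ∧ 2 * x 1 * y 1 = 0 :=
    ⟨congrFun h 0, congrFun h 1, congrFun h 2⟩
  have hsq0 : 2 * x 0 ^ 2 * y 1 = 0 := by linear_combination 2 * x 0 * h1 - x 1 * h0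
  have hsq1 : 2 * x 1 ^ 2 * y 0 = 0 := by linear_combination 2 * x 1 * h1 - x 0 * h2
  have hy' : y 0 ≠ 0 ∨ y 1 ≠ 0 := by
    by_contra! hy0
    exact hy (funext fun i => by fin_cases i <;> simp [hy0])
  apply hx
  ext i
  fin_cases i <;> rcases hy' with hy0 | hy1 <;> simp_all [two_ne_zero]

lemma exists_chordPole_eq_smul [NeZero (2 : F)] {v : Fin 3 → F} (hv : IsSquare (Qc F v)) :
    ∃ x y : Fin 2 → F, ∃ k : F, k ≠ 0 ∧ chordPole x y = k • v := by
  obtain ⟨c, hc⟩ := hv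
  rw [Qc] at hc
  rcases eq_or_ne (v 0) 0 with h0 | h0
  · refine ⟨![0, 1], ![2 * v 1, v 2], 2, two_ne_zero, ?_⟩
    ext i; fin_cases i <;> simp [chordPole, h0]
  · refine ⟨![v 0, v 1 - c], ![v 0, v 1 + c], 2 * v 0, mul_ne_zero two_ne_zero h0, ?_⟩
    ext i; fin_cases i <;> simp [chordPole]
    · ring
    · linear_combination 2 * hc

lemma wedge_rep_eq_zero_iff (A B : ℙ F (Fin 2 → F)) : wedge A.rep B.rep = 0 ↔ A = B := by
  have key : LinearIndependent F ![A.rep, B.rep] ↔ wedge A.rep B.rep ≠ 0 := by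
    refine (Matrix.linearIndependent_rows_iff_isUnit (A := .of ![A.rep, B.rep])).trans ?_
    rw [Matrix.isUnit_iff_isUnit_det, isUnit_iff_ne_zero, Matrix.det_fin_two]
    rfl
  simpa using (key.symm.trans linearIndependent_pair_iff_ne).not

variable [NeZero (2 : F)]

noncomputable def pole : Sym2 (ℙ F (Fin 2 → F)) → ℙ F (Fin 3 → F) :=
  Sym2.lift ⟨fun A B => mk F _ (chordPole_ne_zero A.rep_nonzero B.rep_nonzero),
    fun A B => by simp_rw [chordPole_comm A.rep]⟩

lemma pole_mk (A B : ℙ F (Fin 2 → F)) :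
    pole s(A, B) = mk F _ (chordPole_ne_zero A.rep_nonzero B.rep_nonzero) := rfl

lemma pole_mk_mk {x y : Fin 2 → F} (hx : x ≠ 0) (hy : y ≠ 0) :
    pole s(mk F x hx, mk F y hy) = mk F _ (chordPole_ne_zero hx hy) := by
  obtain ⟨a, ha⟩ := exists_smul_eq_mk_rep F x hx
  obtain ⟨b, hb⟩ := exists_smul_eq_mk_rep F y hy
  rw [pole_mk, mk_eq_mk_iff' F]
  exact ⟨a * b, by rw [← ha, ← hb, Units.smul_def, Units.smul_def, chordPole_smul]⟩

lemma exists_rep_pole (A B : ℙ F (Fin 2 → F)) :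
    ∃ c : F, c ≠ 0 ∧ (pole s(A, B)).rep = c • chordPole A.rep B.rep := by
  obtain ⟨c, hc⟩ := exists_smul_eq_mk_rep F _ (chordPole_ne_zero A.rep_nonzero B.rep_nonzero)
  exact ⟨c, c.ne_zero, hc.symm⟩

lemma external_pole_iff (z : Sym2 (ℙ F (Fin 2 → F))) : External F (pole z) ↔ ¬z.IsDiag := by
  induction z using Sym2.ind with
  | _ A B => simp [pole_mk, external_mk, Qc_chordPole, wedge_rep_eq_zero_iff, IsSquare.sq]

lemma lineDiscr_pole_eq_zero_iff (z w : Sym2 (ℙ F (Fin 2 → F))) :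
    lineDiscr (pole z).rep (pole w).rep = 0 ↔ ∃ a ∈ z, a ∈ w := by
  induction z using Sym2.ind with | _ A B =>
  induction w using Sym2.ind with | _ C D =>
  obtain ⟨c, hc, hcz⟩ := exists_rep_pole A B
  obtain ⟨d, hd, hdw⟩ := exists_rep_pole C D
  have h16 : (16 : F) ≠ 0 := by
    rw [show (16 : F) = 2 ^ 4 by norm_num]; exact pow_ne_zero 4 two_ne_zero
  simp [hcz, hdw, lineDiscr_smul, lineDiscr_chordPole, hc, hd, h16, wedge_rep_eq_zero_iff,
    or_assoc]

lemma polarQc_pole_conicPoint_eq_zero_iff (z : Sym2 (ℙ F (Fin 2 → F))) (C : ℙ F (Fin 2 → F)) :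
    polarQc (pole z).rep (conicPoint C.rep) = 0 ↔ C ∈ z := by
  induction z using Sym2.ind with | _ A B =>
  obtain ⟨c, hc, hcz⟩ := exists_rep_pole A B
  simp only [hcz, polarQc_smul_left, polarQc_chordPole_conicPoint, neg_mul, mul_neg, neg_eq_zero,
    mul_eq_zero, hc, two_ne_zero, wedge_rep_eq_zero_iff, false_or, Sym2.mem_iff]
  exact or_congr eq_comm eq_comm

lemma pole_injective : Function.Injective (pole (F := F)) := fun z w h =>
  Sym2.ext fun C => by
    rw [← polarQc_pole_conicPoint_eq_zero_iff, h, polarQc_pole_conicPoint_eq_zero_iff]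

lemma exists_pole_eq {S : ℙ F (Fin 3 → F)} (hS : IsSquare (Qc F S.rep)) : ∃ z, pole z = S := by
  obtain ⟨x, y, k, hk, hxy⟩ := exists_chordPole_eq_smul hS
  have hxy0 : chordPole x y ≠ 0 := by rw [hxy]; exact smul_ne_zero hk S.rep_nonzero
  have hx : x ≠ 0 := by rintro rfl; exact hxy0 (by ext i; fin_cases i <;> simp [chordPole])
  have hy : y ≠ 0 := by rintro rfl; exact hxy0 (by ext i; fin_cases i <;> simp [chordPole])
  refine ⟨s(mk F x hx, mk F y hy), ?_⟩
  rw [pole_mk_mk]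
  exact ((mk_eq_mk_iff' F _ _ _ S.rep_nonzero).mpr ⟨k, hxy.symm⟩).trans (mk_rep S)

noncomputable def externalEquiv :
    {z : Sym2 (ℙ F (Fin 2 → F)) // ¬z.IsDiag} ≃ {P : ℙ F (Fin 3 → F) // External F P} :=
  .ofBijective (fun z => ⟨pole z.1, (external_pole_iff z.1).mpr z.2⟩)
    ⟨fun z w h => Subtype.ext (pole_injective (congrArg Subtype.val h)), fun P => by
      obtain ⟨z, hz⟩ := exists_pole_eq P.2.1
      exact ⟨⟨z, (external_pole_iff z).mp (hz ▸ P.2)⟩, Subtype.ext hz⟩⟩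

end ConicParametrization

lemma M1_externalEquiv_apply {F : Type} [Field F] [Fintype F] [NeZero (2 : F)]
    (z w : {z : Sym2 (ℙ F (Fin 2 → F)) // ¬z.IsDiag}) :
    M1 F (externalEquiv z) (externalEquiv w) = disjointPairsMatrix _ z w := by
  refine congrArg ind (propext ?_)
  change pole w.1 ∈ NE F (pole z.1) ↔ _
  rw [mem_NE_iff ((external_pole_iff _).mpr z.2).2, ne_eq, lineDiscr_pole_eq_zero_iff]
  simp [(external_pole_iff _).mpr w.2]

theorem stmt13_general (F : Type) [Field F] [Fintype F] (q : ℕ)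
    (hq : Fintype.card F = q) (h4 : q % 4 = 3)
    [Fintype {P : Projectivization F (Fin 3 → F) // External F P}]
    [DecidableEq {P : Projectivization F (Fin 3 → F) // External F P}] :
    M1 F ^ 2 = 1 := by
  classical
  have : NeZero (2 : F) := ⟨Ring.two_ne_zero fun h => by
    have := FiniteField.even_card_iff_char_two.mp h
    omega⟩
  have : Fintype (ℙ F (Fin 2 → F)) := Fintype.ofFinite _
  have hcard : 4 ∣ Fintype.card (ℙ F (Fin 2 → F)) := by
    rw [← Nat.card_eq_fintype_card, card_of_finrank_two F _ (Module.finrank_fin_fun F),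
      Nat.card_eq_fintype_card, hq]
    omega
  have hM : M1 F = (disjointPairsMatrix _).submatrix externalEquiv.symm externalEquiv.symm := by
    ext P R
    rw [Matrix.submatrix_apply, ← M1_externalEquiv_apply, Equiv.apply_symm_apply,
      Equiv.apply_symm_apply]
  rw [hM, sq, Matrix.submatrix_mul_equiv, ← sq, disjointPairsMatrix_sq hcard,
    Matrix.submatrix_one_equiv]

/-- For `q ≡ 3 (mod 4)`, the square of `M1` (whose entries are
`|NE(Pᵢ) ∩ NE(Pⱼ)| mod 2`) equals the identity over `F₂`. -/
theorem stmt13 (F : Type) [Field F] [Fintype F] (q : ℕ)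
    (hq : Fintype.card F = q) (hodd : Odd q) (h4 : q % 4 = 3)
    [Fintype {P : Projectivization F (Fin 3 → F) // External F P}]
    [DecidableEq {P : Projectivization F (Fin 3 → F) // External F P}] :
    M1 F ^ 2 = 1 :=
  stmt13_general F q hq h4
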